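/- For every finite graph G, the symmetric lettericity of G is at most its neighborhood diversity: sl(G) ≤ nd(G). -/

import Mathlib

/-!
Label every vertex by its class in an optimal twin partition, and let the decoder contain the
pair of labels of every edge. Since vertices with equal labels are generalized twins, an edge
between two vertices can be moved, one endpoint at a time, to any other pair of distinct vertices
carrying the same labels; so adjacency of distinct vertices is read off their labels, and any
enumeration of the vertices gives a word realising `G` with a symmetric decoder.
-/

/-- The letter graph `G(D, w)` on vertex set `Fin w.length`: positions `i < j`
are adjacent iff the ordered pair of letters `(w_i, w_j)` lies in the decoder `D`. -/
def letterGraph {A : Type*} (D : Set (A × A)) (w : List A) : SimpleGraph (Fin w.length) where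
  Adj i j := (i < j ∧ (w.get i, w.get j) ∈ D) ∨ (j < i ∧ (w.get j, w.get i) ∈ D)
  symm := ⟨by intro i j h; exact h.symm⟩
  loopless := ⟨by intro i h; rcases h with ⟨h, -⟩ | ⟨h, -⟩ <;> exact lt_irrefl _ h⟩

/-- The lettericity of a finite graph `G`: the smallest `k` such that `G` is
isomorphic to a letter graph over an alphabet of size `k`. -/
noncomputable def lettericity {V : Type*} [Fintype V] (G : SimpleGraph V) : ℕ :=
  sInf {k : ℕ | ∃ (D : Set (Fin k × Fin k)) (w : List (Fin k)),
    w.length = Fintype.card V ∧ Nonempty (G ≃g letterGraph D w)}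

/-- The symmetric lettericity of a finite graph `G`: the smallest `k` such that
`G` is isomorphic to a letter graph over an alphabet of size `k` with a symmetric
decoder. -/
noncomputable def symLettericity {V : Type*} [Fintype V] (G : SimpleGraph V) : ℕ :=
  sInf {k : ℕ | ∃ (D : Set (Fin k × Fin k)) (w : List (Fin k)),
    (∀ x y : Fin k, (x, y) ∈ D ↔ (y, x) ∈ D) ∧
    w.length = Fintype.card V ∧ Nonempty (G ≃g letterGraph D w)}

/-- The neighborhood diversity of a finite graph `G`: the smallest number of parts
of a partition of the vertex set such that any two distinct vertices in the same
part are generalized twins (`N(u) \ {v} = N(v) \ {u}`). -/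
noncomputable def neighborhoodDiversity {V : Type*} [Fintype V] [DecidableEq V]
    (G : SimpleGraph V) : ℕ :=
  sInf {p : ℕ | ∃ P : Finpartition (Finset.univ : Finset V), P.parts.card = p ∧
    ∀ s ∈ P.parts, ∀ u ∈ s, ∀ v ∈ s, u ≠ v →
      G.neighborSet u \ {v} = G.neighborSet v \ {u}}

open SimpleGraph

theorem SimpleGraph.adj_iff_adj_of_neighborSet_sdiff_eq {V : Type*} {G : SimpleGraph V}
    {a b z : V} (htwin : G.neighborSet a \ {b} = G.neighborSet b \ {a}) (hza : z ≠ a)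
    (hzb : z ≠ b) : G.Adj a z ↔ G.Adj b z := by
  simpa [hza, hzb] using Set.ext_iff.mp htwin z

theorem letterGraph_adj_iff_of_symm {A : Type*} {D : Set (A × A)}
    (hD : ∀ x y, (x, y) ∈ D ↔ (y, x) ∈ D) (w : List A) (i j : Fin w.length) :
    (letterGraph D w).Adj i j ↔ i ≠ j ∧ (w.get i, w.get j) ∈ D := by
  change (i < j ∧ _) ∨ (j < i ∧ _) ↔ _
  rw [hD (w.get j)]
  rcases lt_trichotomy i j with h | rfl | h
  · simp [h, h.ne, h.not_gt]
  · simp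
  · simp [h, h.ne', h.not_gt]

section Labeling

variable {V α : Type*} (G : SimpleGraph V) (ℓ : V → α)

def edgeLabelDecoder : Set (α × α) :=
  {p | ∃ a b, ℓ a = p.1 ∧ ℓ b = p.2 ∧ G.Adj a b}

theorem edgeLabelDecoder_symm (x y : α) :
    (x, y) ∈ edgeLabelDecoder G ℓ ↔ (y, x) ∈ edgeLabelDecoder G ℓ := by
  constructor <;> rintro ⟨a, b, ha, hb, hab⟩ <;> exact ⟨b, a, hb, ha, hab.symm⟩

variable {G ℓ}
variable
  (htwin : ∀ a b, ℓ a = ℓ b → a ≠ b → G.neighborSet a \ {b} = G.neighborSet b \ {a})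
include htwin

theorem adj_of_label_eq_left {a b u : V} (hau : ℓ a = ℓ u) (hab : G.Adj a b) (hub : u ≠ b) :
    G.Adj u b := by
  rcases eq_or_ne a u with rfl | hne
  · exact hab
  · exact (adj_iff_adj_of_neighborSet_sdiff_eq (htwin a u hau hne) hab.ne' hub.symm).mp hab

theorem adj_of_label_eq {a b u v : V} (hau : ℓ a = ℓ u) (hbv : ℓ b = ℓ v) (hab : G.Adj a b)
    (huv : u ≠ v) : G.Adj u v := by
  by_cases hav : a = v
  · by_cases hbu : b = u
    · subst hav hbu
      exact hab.symm
    · exact (adj_of_label_eq_left htwin hbv (adj_of_label_eq_left htwin hau hab (Ne.symm hbu)).symm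
        huv.symm).symm
  · exact adj_of_label_eq_left htwin hau
      (adj_of_label_eq_left htwin hbv hab.symm (Ne.symm hav)).symm huv

theorem adj_iff_mem_edgeLabelDecoder {u v : V} (huv : u ≠ v) :
    G.Adj u v ↔ (ℓ u, ℓ v) ∈ edgeLabelDecoder G ℓ := by
  refine ⟨fun h => ⟨u, v, rfl, rfl, h⟩, ?_⟩
  rintro ⟨a, b, hau, hbv, hab⟩
  exact adj_of_label_eq htwin hau hbv hab huv

end Labeling

section Realization

variable {V α : Type*} [Fintype V] {G : SimpleGraph V} {ℓ : V → α} {D : Set (α × α)}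

theorem exists_iso_letterGraph_of_adj_iff (hD : ∀ x y, (x, y) ∈ D ↔ (y, x) ∈ D)
    (hG : ∀ u v, u ≠ v → (G.Adj u v ↔ (ℓ u, ℓ v) ∈ D)) :
    ∃ w : List α, w.length = Fintype.card V ∧ Nonempty (G ≃g letterGraph D w) := by
  let e := Fintype.equivFin V
  let w := List.ofFn (ℓ ∘ e.symm)
  have hw : w.length = Fintype.card V := List.length_ofFn
  let ψ : V ≃ Fin w.length := e.trans (finCongr hw.symm)
  have hget (u : V) : w.get (ψ u) = ℓ u := by simp [w, ψ]
  refine ⟨w, hw, ⟨ψ, fun {u v} => ?_⟩⟩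
  rw [letterGraph_adj_iff_of_symm hD, hget, hget, ψ.injective.ne_iff]
  exact ⟨fun ⟨huv, h⟩ => (hG u v huv).mpr h, fun h => ⟨h.ne, (hG u v h.ne).mp h⟩⟩

theorem symLettericity_le_card_of_adj_iff [Fintype α] (hD : ∀ x y, (x, y) ∈ D ↔ (y, x) ∈ D)
    (hG : ∀ u v, u ≠ v → (G.Adj u v ↔ (ℓ u, ℓ v) ∈ D)) :
    symLettericity G ≤ Fintype.card α := by
  let e := Fintype.equivFin α
  let D' : Set (Fin (Fintype.card α) × Fin (Fintype.card α)) :=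
    {p | (e.symm p.1, e.symm p.2) ∈ D}
  have hD' (x y) : (x, y) ∈ D' ↔ (y, x) ∈ D' := hD _ _
  have hG' (u v : V) (huv : u ≠ v) : G.Adj u v ↔ (e (ℓ u), e (ℓ v)) ∈ D' := by
    simpa [D'] using hG u v huv
  obtain ⟨w, hw, hiso⟩ := exists_iso_letterGraph_of_adj_iff hD' hG'
  exact Nat.sInf_le ⟨D', w, hD', hw, hiso⟩

theorem symLettericity_le_card_of_twin_labeling [Fintype α]
    (htwin : ∀ a b, ℓ a = ℓ b → a ≠ b → G.neighborSet a \ {b} = G.neighborSet b \ {a}) :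
    symLettericity G ≤ Fintype.card α :=
  symLettericity_le_card_of_adj_iff (edgeLabelDecoder_symm G ℓ)
    fun _ _ => adj_iff_mem_edgeLabelDecoder htwin

end Realization

theorem exists_finpartition_card_eq_neighborhoodDiversity {V : Type*} [Fintype V]
    [DecidableEq V] (G : SimpleGraph V) :
    ∃ P : Finpartition (Finset.univ : Finset V), P.parts.card = neighborhoodDiversity G ∧
      ∀ s ∈ P.parts, ∀ u ∈ s, ∀ v ∈ s, u ≠ v →
        G.neighborSet u \ {v} = G.neighborSet v \ {u} := by
  refine Nat.sInf_mem (s := {p | ∃ P : Finpartition (Finset.univ : Finset V), P.parts.card = p ∧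
    ∀ s ∈ P.parts, ∀ u ∈ s, ∀ v ∈ s, u ≠ v →
      G.neighborSet u \ {v} = G.neighborSet v \ {u}}) ?_
  refine ⟨_, ⊥, rfl, fun s hs u hu v hv huv => ?_⟩
  obtain ⟨a, -, rfl⟩ := Finpartition.mem_bot_iff.mp hs
  rw [Finset.mem_singleton] at hu hv
  exact absurd (hu.trans hv.symm) huv

/-- The symmetric lettericity of a finite graph is at most its neighborhood
diversity. -/
theorem symLettericity_le_neighborhoodDiversity {V : Type*} [Fintype V] [DecidableEq V]
    (G : SimpleGraph V) :
    symLettericity G ≤ neighborhoodDiversity G := by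
  obtain ⟨P, hcard, htwin⟩ := exists_finpartition_card_eq_neighborhoodDiversity G
  let ℓ : V → P.parts := fun v => ⟨P.part v, P.part_mem.mpr (Finset.mem_univ v)⟩
  have hℓ : ∀ a b, ℓ a = ℓ b → a ≠ b →
      G.neighborSet a \ {b} = G.neighborSet b \ {a} := by
    intro a b hab hne
    have hb : b ∈ P.part a := by
      rw [show P.part a = P.part b from congrArg Subtype.val hab]
      exact P.mem_part (Finset.mem_univ b)
    exact htwin _ (ℓ a).2 a (P.mem_part (Finset.mem_univ a)) b hb hne
  calc symLettericity G ≤ Fintype.card P.parts := symLettericity_le_card_of_twin_labeling hℓ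
    _ = neighborhoodDiversity G := by rw [Fintype.card_coe, hcard]
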